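/- arXiv:1103.4334 — 2 statements merged into one kernel-verified Lean document; each statement's English description precedes it below -/
import Mathlib

section
/- Let α and β be finite types with decidable equality, let A = Matrix.fromBlocks P Q Qᵀ R : Matrix (α ⊕ β) (α ⊕ β) (ZMod 2) be symmetric, suppose M : Matrix α β (ZMod 2) satisfies Q = P * M, and set B := R - Mᵀ * P * M. Then for all i, j : β, B i j = 1 if and only if P.rank < rank of the submatrix of A with rows indexed by α ⊕ Unit via Sum.elim Sum.inl (fun _ => Sum.inr i) and columns indexed by α ⊕ Unit via Sum.elim Sum.inl (fun _ => Sum.inr j) (i.e., the submatrix on rows α ∪ {i} and columns α ∪ {j}). -/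
open Matrix

lemma my_range_prodMap {K M N M' N' : Type*} [CommRing K]
    [AddCommGroup M] [Module K M] [AddCommGroup N] [Module K N]
    [AddCommGroup M'] [Module K M'] [AddCommGroup N'] [Module K N']
    (f : M →ₗ[K] M') (g : N →ₗ[K] N') :
    LinearMap.range (f.prodMap g) = (LinearMap.range f).prod (LinearMap.range g) := by
  ext ⟨a, b⟩
  simp only [LinearMap.mem_range, Submodule.mem_prod, LinearMap.prodMap_apply, Prod.ext_iff]
  constructor
  · rintro ⟨⟨y₁, y₂⟩, h1, h2⟩
    exact ⟨⟨y₁, h1⟩, ⟨y₂, h2⟩⟩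
  · rintro ⟨⟨y₁, h1⟩, ⟨y₂, h2⟩⟩
    exact ⟨(y₁, y₂), h1, h2⟩

/-- A submodule product is linearly equivalent to the product of submodules. -/
def mySubProdEquiv {K M N : Type*} [Ring K]
    [AddCommGroup M] [Module K M] [AddCommGroup N] [Module K N]
    (p : Submodule K M) (q : Submodule K N) : (p.prod q) ≃ₗ[K] p × q where
  toFun x := (⟨x.1.1, (Submodule.mem_prod.mp x.2).1⟩, ⟨x.1.2, (Submodule.mem_prod.mp x.2).2⟩)
  invFun x := ⟨(x.1.1, x.2.1), Submodule.mem_prod.mpr ⟨x.1.2, x.2.2⟩⟩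
  map_add' _ _ := rfl
  map_smul' _ _ := rfl
  left_inv _ := rfl
  right_inv _ := rfl

lemma my_finrank_submodule_prod {K M N : Type*} [Field K]
    [AddCommGroup M] [Module K M] [AddCommGroup N] [Module K N]
    [FiniteDimensional K M] [FiniteDimensional K N]
    (p : Submodule K M) (q : Submodule K N) :
    Module.finrank K (p.prod q) = Module.finrank K p + Module.finrank K q := by
  rw [(mySubProdEquiv p q).finrank_eq, Module.finrank_prod]

lemma my_rank_fromBlocks_diag {K : Type*} [Field K] {m n m' n' : Type*}
    [Fintype m] [Fintype n] [Fintype m'] [Fintype n']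
    (A : Matrix m n K) (D : Matrix m' n' K) :
    (Matrix.fromBlocks A 0 0 D).rank = A.rank + D.rank := by
  classical
  have h : (Matrix.fromBlocks A 0 0 D).mulVecLin =
      ((LinearEquiv.sumArrowLequivProdArrow m m' K K).symm.toLinearMap.comp
        ((A.mulVecLin.prodMap D.mulVecLin).comp
          (LinearEquiv.sumArrowLequivProdArrow n n' K K).toLinearMap)) := by
    apply LinearMap.ext
    intro x
    funext idx
    cases idx <;>
      simp [Matrix.fromBlocks_mulVec, LinearEquiv.sumArrowLequivProdArrow, Equiv.sumArrowEquivProdArrow]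
  rw [Matrix.rank, h, LinearMap.range_comp,
    LinearMap.range_comp_of_range_eq_top _ (LinearEquiv.range _),
    LinearEquiv.finrank_map_eq, my_range_prodMap, my_finrank_submodule_prod]
  rfl


/-- edges of the reduced graph are detected by ranks of submatrices:
`B i j = 1` iff `rank_A(α ∪ {i}, α ∪ {j}) > rank(P)`. -/
theorem stmt_4 {α β : Type*} [Fintype α] [DecidableEq α] [Fintype β] [DecidableEq β]
    (P : Matrix α α (ZMod 2)) (Q : Matrix α β (ZMod 2)) (R : Matrix β β (ZMod 2))
    (hA : (Matrix.fromBlocks P Q Qᵀ R)ᵀ = Matrix.fromBlocks P Q Qᵀ R)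
    (M : Matrix α β (ZMod 2)) (hM : Q = P * M) :
    ∀ i j : β, (R - Mᵀ * P * M) i j = 1 ↔
      P.rank < ((Matrix.fromBlocks P Q Qᵀ R).submatrix
        (Sum.elim Sum.inl (fun _ : Unit => Sum.inr i))
        (Sum.elim Sum.inl (fun _ : Unit => Sum.inr j))).rank := by
  have hP : Pᵀ = P := by
    ext a b
    have := congrFun (congrFun hA (Sum.inl a)) (Sum.inl b)
    simpa using this
  intro i j
  set t : ZMod 2 := (R - Mᵀ * P * M) i j with ht
  set c : Matrix α Unit (ZMod 2) := Matrix.of (fun a _ => Q a j) with hc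
  set d : Matrix Unit α (ZMod 2) := Matrix.of (fun _ a => Q a i) with hd
  set r : Matrix Unit Unit (ZMod 2) := Matrix.of (fun _ _ => R i j) with hr
  have hS : (Matrix.fromBlocks P Q Qᵀ R).submatrix
        (Sum.elim Sum.inl (fun _ : Unit => Sum.inr i))
        (Sum.elim Sum.inl (fun _ : Unit => Sum.inr j)) = Matrix.fromBlocks P c d r := by
    ext (a | u) (b | v) <;> rfl
  set n : Matrix Unit α (ZMod 2) := Matrix.of (fun _ a => M a i) with hn
  set m : Matrix α Unit (ZMod 2) := Matrix.of (fun a _ => M a j) with hm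
  set L : Matrix (α ⊕ Unit) (α ⊕ Unit) (ZMod 2) := Matrix.fromBlocks 1 0 n 1 with hL
  set U : Matrix (α ⊕ Unit) (α ⊕ Unit) (ZMod 2) := Matrix.fromBlocks 1 m 0 1 with hU
  set s : Matrix Unit Unit (ZMod 2) := Matrix.of (fun _ _ => t) with hs
  have h12 : P * m = c := by
    ext a u
    simp [hm, hc, hM, Matrix.mul_apply]
  have h21 : n * P = d := by
    ext u a
    have : Q a i = (P * M) a i := by rw [hM]
    simp only [hn, hd, Matrix.mul_apply, Matrix.of_apply, this]
    refine Finset.sum_congr rfl fun k _ => ?_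
    have hpk : P k a = P a k := congrFun (congrFun hP a) k
    rw [mul_comm, hpk]
  have h22 : n * (P * m) + s = r := by
    ext u v
    have hMPM : (Mᵀ * P * M) i j = ∑ k, ∑ l, M k i * (P k l * M l j) := by
      simp only [Matrix.mul_apply, Matrix.transpose_apply, Finset.sum_mul]
      rw [Finset.sum_comm]
      refine Finset.sum_congr rfl fun k _ => ?_
      refine Finset.sum_congr rfl fun l _ => ?_
      ring
    simp only [hn, hm, hs, hr, Matrix.add_apply, Matrix.mul_apply, Matrix.of_apply, ht,
      Matrix.sub_apply, hMPM]
    have hsum : ∑ x : α, M x i * ∑ y : α, P x y * M y j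
        = ∑ x : α, ∑ y : α, M x i * (P x y * M y j) := by
      simp [Finset.mul_sum]
    rw [hsum]
    ring
  have hfac : Matrix.fromBlocks P c d r = L * (Matrix.fromBlocks P 0 0 s * U) := by
    rw [hL, hU, Matrix.fromBlocks_multiply, Matrix.fromBlocks_multiply]
    simp only [Matrix.mul_one, Matrix.one_mul, Matrix.mul_zero, Matrix.zero_mul,
      add_zero, zero_add]
    rw [h22, h12, h21]
  have hdetL : IsUnit L.det := by
    rw [hL, Matrix.det_fromBlocks_zero₁₂]
    simp
  have hdetU : IsUnit U.det := by
    rw [hU, Matrix.det_fromBlocks_zero₂₁]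
    simp
  have hrk : ((Matrix.fromBlocks P Q Qᵀ R).submatrix
        (Sum.elim Sum.inl (fun _ : Unit => Sum.inr i))
        (Sum.elim Sum.inl (fun _ : Unit => Sum.inr j))).rank = P.rank + s.rank := by
    rw [hS, hfac, Matrix.rank_mul_eq_right_of_isUnit_det L _ hdetL,
      Matrix.rank_mul_eq_left_of_isUnit_det U _ hdetU, my_rank_fromBlocks_diag]
  rw [hrk]
  have hcases : ∀ x : ZMod 2, x = 0 ∨ x = 1 := by decide
  rcases hcases t with h0 | h1
  · have hs0 : s = 0 := by
      ext u v
      simp [hs, h0]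
    rw [h0, hs0, Matrix.rank_zero]
    simp
  · have hs1 : s = 1 := by
      ext u v
      simp [hs, h1, Matrix.one_apply]
    rw [h1, hs1, Matrix.rank_one]
    simp
end

section
/- Let α, β, γ be finite types with decidable equality and let A : Matrix (α ⊕ (β ⊕ γ)) (α ⊕ (β ⊕ γ)) (ZMod 2) be symmetric. Suppose M₁ : Matrix α (β ⊕ γ) (ZMod 2) satisfies A.toBlocks₁₂ = A.toBlocks₁₁ * M₁, and set B := A.toBlocks₂₂ - M₁ᵀ * A.toBlocks₁₁ * M₁. Suppose further that M₂ : Matrix β γ (ZMod 2) satisfies B.toBlocks₁₂ = B.toBlocks₁₁ * M₂, and let A' be the reindexing of A along the equivalence α ⊕ (β ⊕ γ) ≃ (α ⊕ β) ⊕ γ, with M : Matrix (α ⊕ β) γ (ZMod 2) satisfying A'.toBlocks₁₂ = A'.toBlocks₁₁ * M. Then B.toBlocks₂₂ - M₂ᵀ * B.toBlocks₁₁ * M₂ = A'.toBlocks₂₂ - Mᵀ * A'.toBlocks₁₁ * M. (Path invariance: Γ_β(Γ_α(A)) = Γ_{α∪β}(A).) -/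
/-!
Because `A₁₁` is symmetric, the reduction `A₂₂ - Mᵀ A₁₁ M` does not depend on the solution `M`
of `A₁₁ M = A₁₂`: for any two solutions, `Mᵀ A₁₁ M = (A₁₁ M)ᵀ M = (A₁₁ N)ᵀ M = Nᵀ A₁₂`.
So it suffices to exhibit one solution for the merged block `α ⊕ β`; writing
`M₁ = (M₁β | M₁γ)`, the two step witnesses combine into `N = (M₁γ - M₁β M₂ ; M₂)`,
and with this `N` both sides expand to the same expression.
-/

open Matrix

namespace Matrix

variable {R α β γ : Type*}

theorem IsSymm.toBlocks₁₁ {A : Matrix (α ⊕ β) (α ⊕ β) R} (hA : A.IsSymm) :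
    A.toBlocks₁₁.IsSymm :=
  congr_arg Matrix.toBlocks₁₁ hA

theorem IsSymm.toBlocks₂₁ {A : Matrix (α ⊕ β) (α ⊕ β) R} (hA : A.IsSymm) :
    A.toBlocks₂₁ = A.toBlocks₁₂ᵀ :=
  (congr_arg Matrix.toBlocks₂₁ hA).symm

theorem transpose_mul_mul_eq_of_mul_eq [CommSemiring R] [Fintype α] {G : Matrix α α R}
    (hG : G.IsSymm) {Q M N : Matrix α β R} (hM : Q = G * M) (hN : Q = G * N) :
    Mᵀ * G * M = Nᵀ * Q := by
  calc Mᵀ * G * M = (G * M)ᵀ * M := by rw [transpose_mul, hG.eq]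
    _ = (G * N)ᵀ * M := by rw [← hM, ← hN]
    _ = Nᵀ * Q := by rw [transpose_mul, hG.eq, Matrix.mul_assoc, ← hM]

theorem toRows₁_transpose (K : Matrix α (β ⊕ γ) R) : Kᵀ.toRows₁ = K.toCols₁ᵀ := rfl

theorem toCols₁_mul [Fintype α] [NonUnitalNonAssocSemiring R] (P : Matrix α α R)
    (K : Matrix α (β ⊕ γ) R) : (P * K).toCols₁ = P * K.toCols₁ := rfl

theorem toCols₂_mul [Fintype α] [NonUnitalNonAssocSemiring R] (P : Matrix α α R)
    (K : Matrix α (β ⊕ γ) R) : (P * K).toCols₂ = P * K.toCols₂ := rfl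

section Reindex

variable (A : Matrix (α ⊕ (β ⊕ γ)) (α ⊕ (β ⊕ γ)) R)

theorem toBlocks₁₁_reindex_sumAssoc_symm :
    (reindex (Equiv.sumAssoc α β γ).symm (Equiv.sumAssoc α β γ).symm A).toBlocks₁₁ =
      fromBlocks A.toBlocks₁₁ A.toBlocks₁₂.toCols₁ A.toBlocks₂₁.toRows₁
        A.toBlocks₂₂.toBlocks₁₁ := by
  ext (i | i) (j | j) <;> rfl

theorem toBlocks₁₂_reindex_sumAssoc_symm :
    (reindex (Equiv.sumAssoc α β γ).symm (Equiv.sumAssoc α β γ).symm A).toBlocks₁₂ =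
      fromRows A.toBlocks₁₂.toCols₂ A.toBlocks₂₂.toBlocks₁₂ := by
  ext (i | i) j <;> rfl

theorem toBlocks₂₂_reindex_sumAssoc_symm :
    (reindex (Equiv.sumAssoc α β γ).symm (Equiv.sumAssoc α β γ).symm A).toBlocks₂₂ =
      A.toBlocks₂₂.toBlocks₂₂ :=
  rfl

end Reindex

section SubTransposeMulMul

variable [Fintype α] [NonUnitalNonAssocRing R]
  (S : Matrix (β ⊕ γ) (β ⊕ γ) R) (P : Matrix α α R) (K : Matrix α (β ⊕ γ) R)

theorem toBlocks₁₁_sub_transpose_mul_mul :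
    (S - Kᵀ * P * K).toBlocks₁₁ = S.toBlocks₁₁ - K.toCols₁ᵀ * P * K.toCols₁ := rfl

theorem toBlocks₁₂_sub_transpose_mul_mul :
    (S - Kᵀ * P * K).toBlocks₁₂ = S.toBlocks₁₂ - K.toCols₁ᵀ * P * K.toCols₂ := rfl

theorem toBlocks₂₂_sub_transpose_mul_mul :
    (S - Kᵀ * P * K).toBlocks₂₂ = S.toBlocks₂₂ - K.toCols₂ᵀ * P * K.toCols₂ := rfl

end SubTransposeMulMul

theorem toBlocks₁₂_reindex_sumAssoc_symm_eq_mul_fromRows [CommRing R] [Fintype α] [Fintype β]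
    {A : Matrix (α ⊕ (β ⊕ γ)) (α ⊕ (β ⊕ γ)) R} (hA : A.IsSymm)
    {M₁ : Matrix α (β ⊕ γ) R} (hM₁ : A.toBlocks₁₂ = A.toBlocks₁₁ * M₁)
    {M₂ : Matrix β γ R}
    (hM₂ : (A.toBlocks₂₂ - M₁ᵀ * A.toBlocks₁₁ * M₁).toBlocks₁₂ =
      (A.toBlocks₂₂ - M₁ᵀ * A.toBlocks₁₁ * M₁).toBlocks₁₁ * M₂) :
    (reindex (Equiv.sumAssoc α β γ).symm (Equiv.sumAssoc α β γ).symm A).toBlocks₁₂ =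
      (reindex (Equiv.sumAssoc α β γ).symm (Equiv.sumAssoc α β γ).symm A).toBlocks₁₁ *
        fromRows (M₁.toCols₂ - M₁.toCols₁ * M₂) M₂ := by
  rw [toBlocks₁₂_sub_transpose_mul_mul, toBlocks₁₁_sub_transpose_mul_mul,
    sub_eq_iff_eq_add] at hM₂
  rw [toBlocks₁₁_reindex_sumAssoc_symm, toBlocks₁₂_reindex_sumAssoc_symm,
    fromBlocks_mul_fromRows, hA.toBlocks₂₁, hM₁, fromRows_ext_iff]
  constructor
  · simp only [toCols₁_mul, toCols₂_mul, Matrix.mul_sub, Matrix.mul_assoc]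
    abel
  · rw [toRows₁_transpose, toCols₁_mul, transpose_mul, hA.toBlocks₁₁.eq, hM₂]
    simp only [Matrix.mul_sub, Matrix.sub_mul, Matrix.mul_assoc]
    abel

end Matrix

theorem stmt_7_general {α β γ : Type*} [Fintype α] [Fintype β]
    (A : Matrix (α ⊕ (β ⊕ γ)) (α ⊕ (β ⊕ γ)) (ZMod 2)) (hA : Aᵀ = A)
    (M₁ : Matrix α (β ⊕ γ) (ZMod 2)) (hM₁ : A.toBlocks₁₂ = A.toBlocks₁₁ * M₁)
    (B : Matrix (β ⊕ γ) (β ⊕ γ) (ZMod 2)) (hB : B = A.toBlocks₂₂ - M₁ᵀ * A.toBlocks₁₁ * M₁)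
    (M₂ : Matrix β γ (ZMod 2)) (hM₂ : B.toBlocks₁₂ = B.toBlocks₁₁ * M₂)
    (A' : Matrix ((α ⊕ β) ⊕ γ) ((α ⊕ β) ⊕ γ) (ZMod 2))
    (hA' : A' = Matrix.reindex (Equiv.sumAssoc α β γ).symm (Equiv.sumAssoc α β γ).symm A)
    (M : Matrix (α ⊕ β) γ (ZMod 2)) (hM : A'.toBlocks₁₂ = A'.toBlocks₁₁ * M) :
    B.toBlocks₂₂ - M₂ᵀ * B.toBlocks₁₁ * M₂ = A'.toBlocks₂₂ - Mᵀ * A'.toBlocks₁₁ * M := by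
  subst hB hA'
  have hN := toBlocks₁₂_reindex_sumAssoc_symm_eq_mul_fromRows hA hM₁ hM₂
  have hMN := transpose_mul_mul_eq_of_mul_eq (IsSymm.reindex hA _).toBlocks₁₁ hM hN
  rw [hMN, Matrix.mul_assoc M₂ᵀ, ← hM₂, toBlocks₁₂_sub_transpose_mul_mul,
    toBlocks₂₂_sub_transpose_mul_mul, toBlocks₁₂_reindex_sumAssoc_symm,
    toBlocks₂₂_reindex_sumAssoc_symm, hM₁, toCols₂_mul, transpose_fromRows, fromCols_mul_fromRows]
  simp only [transpose_sub, transpose_mul, Matrix.mul_sub, Matrix.sub_mul, Matrix.mul_assoc]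
  abel

/-- path invariance of graph reductions: `Γ_β(Γ_α(A)) = Γ_{α∪β}(A)`. -/
theorem stmt_7 {α β γ : Type*} [Fintype α] [DecidableEq α] [Fintype β] [DecidableEq β]
    [Fintype γ] [DecidableEq γ]
    (A : Matrix (α ⊕ (β ⊕ γ)) (α ⊕ (β ⊕ γ)) (ZMod 2)) (hA : Aᵀ = A)
    (M₁ : Matrix α (β ⊕ γ) (ZMod 2)) (hM₁ : A.toBlocks₁₂ = A.toBlocks₁₁ * M₁)
    (B : Matrix (β ⊕ γ) (β ⊕ γ) (ZMod 2)) (hB : B = A.toBlocks₂₂ - M₁ᵀ * A.toBlocks₁₁ * M₁)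
    (M₂ : Matrix β γ (ZMod 2)) (hM₂ : B.toBlocks₁₂ = B.toBlocks₁₁ * M₂)
    (A' : Matrix ((α ⊕ β) ⊕ γ) ((α ⊕ β) ⊕ γ) (ZMod 2))
    (hA' : A' = Matrix.reindex (Equiv.sumAssoc α β γ).symm (Equiv.sumAssoc α β γ).symm A)
    (M : Matrix (α ⊕ β) γ (ZMod 2)) (hM : A'.toBlocks₁₂ = A'.toBlocks₁₁ * M) :
    B.toBlocks₂₂ - M₂ᵀ * B.toBlocks₁₁ * M₂ = A'.toBlocks₂₂ - Mᵀ * A'.toBlocks₁₁ * M :=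
  stmt_7_general A hA M₁ hM₁ B hB M₂ hM₂ A' hA' M hM
end
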